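/- Let M be a multiplication R-module with ann(M) a prime ideal of R, not simple. If the Golomb space G(M) on M \ {0} is a T₀-space, then J(M) = 0. -/

import Mathlib

open Pointwise

/-!
An element `j` of `J(M)` is a non-generator: `N + Rj = M` forces `N = M`, because every proper
submodule `I M` of a multiplication module with prime annihilator lies in a maximal submodule `Q M`,
where `Q` is a maximal ideal containing `I + ann M`. So the only basic open set containing `j` is
`M` itself, all nonzero elements of `J(M)` have the same neighbourhoods, and T₀ leaves `j` as the
only nonzero element of `J(M)`. Since `M` is torsion-free over the domain `R / ann M`, `r j = j`
then gives `1 - r ∈ ann M` for every `r ∉ ann M`; so `ann M` is maximal, `0 = (ann M) M` is a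
maximal submodule, and `J(M) = 0`.
-/

namespace Module

def IsMultiplication (R M : Type*) [CommRing R] [AddCommGroup M] [Module R M] : Prop :=
  ∀ N : Submodule R M, ∃ I : Ideal R, N = I • (⊤ : Submodule R M)

end Module

namespace Submodule

variable {R M : Type*} [Ring R] [AddCommGroup M] [Module R M]

theorem annihilator_smul_top : Module.annihilator R M • (⊤ : Submodule R M) = ⊥ :=
  annihilator_top (R := R) (M := M) ▸ annihilator_smul ⊤

theorem eq_top_of_sup_span_singleton_eq_top [IsCoatomic (Submodule R M)] {j : M}
    (hj : j ∈ Module.jacobson R M) {N : Submodule R M} (hN : N ⊔ span R {j} = ⊤) : N = ⊤ := by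
  refine (eq_top_or_exists_le_coatom N).resolve_right fun ⟨C, hC, hNC⟩ => hC.1 ?_
  rw [eq_top_iff, ← hN]
  exact sup_le hNC (span_singleton_le_iff_mem _ _ |>.mpr (mem_sInf.mp hj C hC))

theorem sup_span_singleton_eq_of_sub_mem {N : Submodule R M} {x y : M} (h : x - y ∈ N) :
    N ⊔ span R {x} = N ⊔ span R {y} := by
  have key : ∀ {a b : M}, a - b ∈ N → N ⊔ span R {a} ≤ N ⊔ span R {b} := fun {a b} hab =>
    sup_le le_sup_left <| span_singleton_le_iff_mem _ _ |>.mpr <| by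
      rw [← sub_add_cancel a b]
      exact add_mem (mem_sup_left hab) (mem_sup_right (mem_span_singleton_self b))
  exact le_antisymm (key h) (key (by rw [← neg_sub]; exact neg_mem h))

end Submodule

namespace Module.IsMultiplication

open Submodule

variable {R M : Type*} [CommRing R] [AddCommGroup M] [Module R M]
  (hmul : IsMultiplication R M) (hp : (Module.annihilator R M).IsPrime)
include hmul hp

theorem smul_ne_zero {r : R} (hr : r ∉ Module.annihilator R M) {m : M} (hm : m ≠ 0) :
    r • m ≠ 0 := by
  intro hrm
  obtain ⟨I, hI⟩ := hmul (span R {m})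
  have hIr : ∀ s ∈ I, r * s ∈ Module.annihilator R M := by
    intro s hs
    refine Module.mem_annihilator.mpr fun x => ?_
    have hsx : s • x ∈ span R {m} := hI ▸ smul_mem_smul hs mem_top
    obtain ⟨c, hc⟩ := mem_span_singleton.mp hsx
    rw [mul_smul, ← hc, smul_comm, hrm, smul_zero]
  have hIann : I ≤ Module.annihilator R M := fun s hs =>
    (hp.mem_or_mem (hIr s hs)).resolve_left hr
  refine hm (span_singleton_eq_bot (R := R).mp ?_)
  rw [hI, eq_bot_iff, ← annihilator_smul_top]
  exact smul_mono_left (N := (⊤ : Submodule R M)) hIann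

theorem sup_annihilator_eq_top [Nontrivial M] {I : Ideal R}
    (hI : I • (⊤ : Submodule R M) = ⊤) : I ⊔ Module.annihilator R M = ⊤ := by
  obtain ⟨m, hm⟩ := exists_ne (0 : M)
  obtain ⟨K, hK⟩ := hmul (span R {m})
  have hspan : span R {m} = I • span R {m} := by
    rw [hK, ← smul_assoc, smul_eq_mul, mul_comm, ← smul_eq_mul, smul_assoc, hI]
  obtain ⟨q, hq, hqm⟩ := mem_smul_span_singleton.mp (hspan ▸ mem_span_singleton_self m)
  have h1q : 1 - q ∈ Module.annihilator R M := by
    by_contra h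
    exact hmul.smul_ne_zero hp h hm (by rw [sub_smul, one_smul, hqm, sub_self])
  rw [Ideal.eq_top_iff_one, ← add_sub_cancel q 1]
  exact add_mem (mem_sup_left hq) (mem_sup_right h1q)

theorem isCoatom_smul_top [Nontrivial M] {Q : Ideal R} (hQ : Q.IsMaximal)
    (hannQ : Module.annihilator R M ≤ Q) : IsCoatom (Q • (⊤ : Submodule R M)) := by
  refine ⟨fun h => hQ.ne_top ?_, fun N hQN => ?_⟩
  · simpa [sup_of_le_left hannQ] using hmul.sup_annihilator_eq_top hp h
  obtain ⟨I, rfl⟩ := hmul N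
  have hIQ : ¬ I ≤ Q := fun h => hQN.not_ge (smul_mono_left h)
  symm
  calc ⊤ = (Q ⊔ I) • (⊤ : Submodule R M) := by rw [hQ.out.2 _ (left_lt_sup.mpr hIQ), top_smul]
    _ = Q • ⊤ ⊔ I • ⊤ := sup_smul _ _ _
    _ = I • ⊤ := sup_eq_right.mpr hQN.le

theorem isCoatomic [Nontrivial M] : IsCoatomic (Submodule R M) := by
  refine ⟨fun N => or_iff_not_imp_left.mpr fun hN => ?_⟩
  obtain ⟨I, rfl⟩ := hmul N
  have hIann : I ⊔ Module.annihilator R M ≠ ⊤ := fun h => hN <| by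
    rw [← sup_bot_eq (I • ⊤), ← annihilator_smul_top, ← sup_smul, h, top_smul]
  obtain ⟨Q, hQ, hIQ⟩ := Ideal.exists_le_maximal _ hIann
  exact ⟨Q • ⊤, hmul.isCoatom_smul_top hp hQ (le_sup_right.trans hIQ),
    smul_mono_left (le_sup_left.trans hIQ)⟩

theorem isMaximal_annihilator_of_smul_eq_self {j : M} (hj : j ≠ 0)
    (h : ∀ r ∉ Module.annihilator R M, r • j = j) : (Module.annihilator R M).IsMaximal := by
  refine Ideal.isMaximal_iff.mpr ⟨fun h1 => hj ?_, fun I r hannI hr hrI => ?_⟩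
  · simpa using Module.mem_annihilator.mp h1 j
  have h1r : 1 - r ∈ Module.annihilator R M := by
    by_contra h'
    exact hmul.smul_ne_zero hp h' hj (by rw [sub_smul, one_smul, h r hr, sub_self])
  simpa using add_mem hrI (hannI h1r)

end Module.IsMultiplication

def golombBasis (R M : Type*) [Ring R] [AddCommGroup M] [Module R M] : Set (Set M) :=
  {S | ∃ (x : M) (N : Submodule R M),
      N ≠ ⊥ ∧ N ⊔ Submodule.span R {x} = ⊤ ∧ S = x +ᵥ (N : Set M)}

section Golomb

open Submodule

variable {R M : Type*} [Ring R] [AddCommGroup M] [Module R M]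

theorem nhds_golomb_eq_top_of_mem_jacobson [IsCoatomic (Submodule R M)] {j : M}
    (hj : j ∈ Module.jacobson R M) :
    @nhds M (TopologicalSpace.generateFrom (golombBasis R M)) j = ⊤ := by
  rw [TopologicalSpace.nhds_generateFrom, iInf₂_eq_top]
  rintro _ ⟨hjS, x, N, -, hN, rfl⟩
  obtain ⟨n, hn, rfl⟩ := Set.mem_vadd_set.mp hjS
  have hjx : x + n - x ∈ N := by simpa using hn
  obtain rfl : N = ⊤ :=
    eq_top_of_sup_span_singleton_eq_top hj ((sup_span_singleton_eq_of_sub_mem hjx).trans hN)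
  simp

theorem eq_of_mem_jacobson_of_golomb_t0Space [IsCoatomic (Submodule R M)]
    (hT0 : @T0Space {x : M // x ≠ 0}
      ((TopologicalSpace.generateFrom (golombBasis R M)).induced Subtype.val))
    {j j' : M} (hj : j ∈ Module.jacobson R M) (hj' : j' ∈ Module.jacobson R M)
    (hj0 : j ≠ 0) (hj'0 : j' ≠ 0) : j = j' := by
  let _ := TopologicalSpace.generateFrom (golombBasis R M)
  have : Inseparable (⟨j, hj0⟩ : {x : M // x ≠ 0}) ⟨j', hj'0⟩ := by
    change nhds _ = nhds _
    rw [nhds_induced, nhds_induced, nhds_golomb_eq_top_of_mem_jacobson hj,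
      nhds_golomb_eq_top_of_mem_jacobson hj']
  exact congrArg Subtype.val this.eq

end Golomb

theorem jacobson_bot_of_golomb_t0_general
    {R M : Type*} [CommRing R] [AddCommGroup M] [Module R M] [Nontrivial M]
    (hmul : ∀ N : Submodule R M, ∃ I : Ideal R, N = I • (⊤ : Submodule R M))
    (hp : ((⊥ : Submodule R M).colon ⊤).IsPrime) :
    letI B : Set (Set M) := {S | ∃ (x : M) (N : Submodule R M),
      N ≠ ⊥ ∧ N ⊔ Submodule.span R {x} = ⊤ ∧ S = x +ᵥ (N : Set M)}
    letI t : TopologicalSpace M := TopologicalSpace.generateFrom B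
    @T0Space {x : M // x ≠ 0} (t.induced Subtype.val) →
      sInf {P : Submodule R M | IsCoatom P} = ⊥ := by
  intro hT0
  rw [show (⊥ : Submodule R M).colon ⊤ = Module.annihilator R M from
    Submodule.bot_colon.trans Submodule.annihilator_top] at hp
  have := Module.IsMultiplication.isCoatomic hmul hp
  change Module.jacobson R M = ⊥
  by_contra hJ
  obtain ⟨j, hj, hj0⟩ := (Submodule.ne_bot_iff _).mp hJ
  have hmax : (Module.annihilator R M).IsMaximal :=
    Module.IsMultiplication.isMaximal_annihilator_of_smul_eq_self hmul hp hj0 fun r hr =>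
      (eq_of_mem_jacobson_of_golomb_t0Space hT0 hj (Submodule.smul_mem _ r hj) hj0
        (Module.IsMultiplication.smul_ne_zero hmul hp hr hj0)).symm
  have hbot : IsCoatom (⊥ : Submodule R M) :=
    Submodule.annihilator_smul_top (R := R) (M := M) ▸
      Module.IsMultiplication.isCoatom_smul_top hmul hp hmax le_rfl
  exact hj0 ((Submodule.mem_bot R).mp (Submodule.mem_sInf.mp hj ⊥ hbot))

/-- If `M` is a non-simple multiplication module with prime annihilator and the
Golomb space `G(M)` on `M \ {0}` is `T₀`, then `J(M) = 0`. -/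
theorem jacobson_bot_of_golomb_t0
    {R M : Type*} [CommRing R] [AddCommGroup M] [Module R M] [Nontrivial M]
    (hmul : ∀ N : Submodule R M, ∃ I : Ideal R, N = I • (⊤ : Submodule R M))
    (hp : ((⊥ : Submodule R M).colon ⊤).IsPrime)
    (hns : ¬ IsSimpleModule R M) :
    letI B : Set (Set M) := {S | ∃ (x : M) (N : Submodule R M),
      N ≠ ⊥ ∧ N ⊔ Submodule.span R {x} = ⊤ ∧ S = x +ᵥ (N : Set M)}
    letI t : TopologicalSpace M := TopologicalSpace.generateFrom B
    @T0Space {x : M // x ≠ 0} (t.induced Subtype.val) →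
      sInf {P : Submodule R M | IsCoatom P} = ⊥ :=
  jacobson_bot_of_golomb_t0_general hmul hp
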